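/- arXiv:2407.01974 — 2 statements merged into one kernel-verified Lean document; each statement's English description precedes it below -/
import Mathlib

section
/- Let Σ ∈ PDS(k), let L be a k²×ℓ matrix of full column rank whose columns are vec's of symmetric matrices, and let Π_L = L (Lᵀ (Σ⁻¹ ⊗ Σ⁻¹) L)⁻¹ Lᵀ (Σ⁻¹ ⊗ Σ⁻¹). Then Π_L (I_{k²} + K_{k,k}) (Σ ⊗ Σ) Π_Lᵀ = 2 L (Lᵀ (Σ⁻¹ ⊗ Σ⁻¹) L)⁻¹ Lᵀ. -/
/-!
With `G = Σ⁻¹ ⊗ Σ⁻¹` we have `(Σ ⊗ Σ) G = 1`, so the middle of the sandwich collapses: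
`Lᵀ G (1 + K) (Σ ⊗ Σ) G L = Lᵀ G L + Lᵀ G (K L)`. As `K` transposes vec's and the columns of `L`
are vec's of symmetric matrices, `K L = L`, hence the middle equals `2 Lᵀ G L`, and the two outer
factors `(Lᵀ G L)⁻¹` cancel one copy of it. `Lᵀ G L` is invertible because `G` is positive
definite and `L`, having full column rank, is injective.
-/

open Matrix
open scoped Kronecker

/-- `vecm M` stacks the columns of `M` into a vector: `vecm M (j, i) = M i j`. -/
def vecm {k : ℕ} (M : Matrix (Fin k) (Fin k) ℝ) : Fin k × Fin k → ℝ :=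
  fun p => M p.2 p.1

namespace Matrix

section WeightedProjection

variable {m n R : Type*} [Fintype m] [Fintype n] [DecidableEq n] [CommRing R]

/-- The projection `Π_L` of the paper, for a general weight `G` in place of `Σ⁻¹ ⊗ Σ⁻¹`. -/
noncomputable def weightedProjection (L : Matrix m n R) (G : Matrix m m R) : Matrix m m R :=
  L * (Lᵀ * G * L)⁻¹ * Lᵀ * G

theorem transpose_weightedProjection {L : Matrix m n R} {G : Matrix m m R} (hG : Gᵀ = G) :
    (weightedProjection L G)ᵀ = G * L * (Lᵀ * G * L)⁻¹ * Lᵀ := by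
  simp only [weightedProjection, transpose_mul, transpose_transpose, transpose_nonsing_inv, hG,
    Matrix.mul_assoc]

theorem weightedProjection_mul_one_add_mul_mul_transpose [DecidableEq m] {L : Matrix m n R}
    {G W K : Matrix m m R} (hG : Gᵀ = G) (hWG : W * G = 1) (hKL : K * L = L)
    (hM : IsUnit (Lᵀ * G * L).det) :
    weightedProjection L G * ((1 + K) * W) * (weightedProjection L G)ᵀ =
      (2 : R) • (L * (Lᵀ * G * L)⁻¹ * Lᵀ) := by
  set M := Lᵀ * G * L
  have hmiddle : Lᵀ * G * ((1 + K) * W) * G * L = (2 : R) • M := by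
    calc Lᵀ * G * ((1 + K) * W) * G * L = Lᵀ * G * (1 + K) * (W * G) * L := by
          simp only [Matrix.mul_assoc]
      _ = M + Lᵀ * G * (K * L) := by
          rw [hWG, Matrix.mul_one, Matrix.mul_add, Matrix.mul_one, Matrix.add_mul,
            Matrix.mul_assoc (Lᵀ * G) K]
      _ = (2 : R) • M := by rw [hKL, two_smul]
  rw [transpose_weightedProjection hG, weightedProjection]
  calc L * M⁻¹ * Lᵀ * G * ((1 + K) * W) * (G * L * M⁻¹ * Lᵀ)
      = L * M⁻¹ * (Lᵀ * G * ((1 + K) * W) * G * L) * M⁻¹ * Lᵀ := by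
        simp only [Matrix.mul_assoc]
    _ = (2 : R) • (L * (M⁻¹ * M * M⁻¹) * Lᵀ) := by
        rw [hmiddle]
        simp only [Matrix.mul_smul, Matrix.smul_mul, Matrix.mul_assoc]
    _ = (2 : R) • (L * M⁻¹ * Lᵀ) := by
        rw [nonsing_inv_mul _ hM, Matrix.one_mul, Matrix.mul_assoc]

end WeightedProjection

theorem mulVec_injective_of_rank_eq_card {m n K : Type*} [Fintype n] [Field K]
    {A : Matrix m n K} (hA : A.rank = Fintype.card n) : Function.Injective A.mulVec :=
  mulVec_injective_iff.mpr <| linearIndependent_iff_card_eq_finrank_span.mpr <|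
    hA.symm.trans A.rank_eq_finrank_span_cols

theorem PosDef.transpose_mul_mul_of_rank_eq_card {m n : Type*} [Fintype m] [Fintype n]
    {G : Matrix m m ℝ} (hG : G.PosDef) {L : Matrix m n ℝ} (hL : L.rank = Fintype.card n) :
    (Lᵀ * G * L).PosDef := by
  simpa [conjTranspose_eq_transpose_of_trivial] using
    hG.conjTranspose_mul_mul_same (mulVec_injective_of_rank_eq_card hL)

end Matrix

theorem mul_of_vecm_eq_self {k l : ℕ} {K : Matrix (Fin k × Fin k) (Fin k × Fin k) ℝ}
    (hK : ∀ A : Matrix (Fin k) (Fin k) ℝ, K.mulVec (vecm A) = vecm Aᵀ)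
    {Ls : Fin l → Matrix (Fin k) (Fin k) ℝ} (hsym : ∀ j, (Ls j)ᵀ = Ls j) :
    K * Matrix.of (fun p j => vecm (Ls j) p) = Matrix.of fun p j => vecm (Ls j) p := by
  ext p j
  have h := congrFun (hK (Ls j)) p
  rw [hsym j] at h
  exact h

/-- `Π_L (I + K)(Σ ⊗ Σ) Π_Lᵀ = 2 L (Lᵀ (Σ⁻¹ ⊗ Σ⁻¹) L)⁻¹ Lᵀ` where `Π_L` is the scaled
projection, `K` the commutation matrix and the columns of `L` are vec's of symmetric matrices. -/
theorem projection_sandwich {k l : ℕ}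
    (S : Matrix (Fin k) (Fin k) ℝ) (hS : S.PosDef)
    (K : Matrix (Fin k × Fin k) (Fin k × Fin k) ℝ)
    (hK : ∀ A : Matrix (Fin k) (Fin k) ℝ, K.mulVec (vecm A) = vecm Aᵀ)
    (Ls : Fin l → Matrix (Fin k) (Fin k) ℝ)
    (hsym : ∀ j, (Ls j)ᵀ = Ls j)
    (L : Matrix (Fin k × Fin k) (Fin l) ℝ)
    (hLdef : L = Matrix.of fun p j => vecm (Ls j) p)
    (hrank : L.rank = l) :
    (L * (Lᵀ * (S⁻¹ ⊗ₖ S⁻¹) * L)⁻¹ * Lᵀ * (S⁻¹ ⊗ₖ S⁻¹)) * ((1 + K) * (S ⊗ₖ S)) *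
        (L * (Lᵀ * (S⁻¹ ⊗ₖ S⁻¹) * L)⁻¹ * Lᵀ * (S⁻¹ ⊗ₖ S⁻¹))ᵀ =
      (2 : ℝ) • (L * (Lᵀ * (S⁻¹ ⊗ₖ S⁻¹) * L)⁻¹ * Lᵀ) := by
  have hG : (S⁻¹ ⊗ₖ S⁻¹).PosDef := hS.inv.kronecker hS.inv
  have hWG : (S ⊗ₖ S) * (S⁻¹ ⊗ₖ S⁻¹) = 1 := by
    rw [← mul_kronecker_mul, mul_nonsing_inv _ (S.isUnit_iff_isUnit_det.mp hS.isUnit),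
      one_kronecker_one]
  have hKL : K * L = L := hLdef ▸ mul_of_vecm_eq_self hK hsym
  have hM : (Lᵀ * (S⁻¹ ⊗ₖ S⁻¹) * L).PosDef :=
    hG.transpose_mul_mul_of_rank_eq_card (hrank.trans (Fintype.card_fin l).symm)
  exact weightedProjection_mul_one_add_mul_mul_transpose (isHermitian_iff_isSymm.mp hG.1).eq hWG
    hKL (isUnit_iff_isUnit_det _ |>.mp hM.isUnit)
end

section
/- Let D_k be the k²×k(k+1)/2 duplication matrix satisfying D_k vech(A) = vec(A) and (D_kᵀ D_k)⁻¹ D_kᵀ vec(A) = vech(A) for symmetric A. Then for any Σ ∈ PDS(k), D_k (D_kᵀ (Σ⁻¹ ⊗ Σ⁻¹) D_k)⁻¹ D_kᵀ = (1/2)(I_{k²} + K_{k,k})(Σ ⊗ Σ). -/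
open Matrix
open scoped Kronecker

/-!
`P = D (DᵀD)⁻¹Dᵀ` is the orthogonal projection onto the column space of `D`. For the duplication
matrix that space is `vec` of the symmetric matrices, so `P` is the symmetrizer `½ (I + K)`.
Since `P` commutes with `Σ ⊗ Σ` and `Σ⁻¹ ⊗ Σ⁻¹`, the matrix `(DᵀD)⁻¹Dᵀ (Σ ⊗ Σ) D (DᵀD)⁻¹` inverts
`Dᵀ (Σ⁻¹ ⊗ Σ⁻¹) D`, and conjugating it by `D` gives `P (Σ ⊗ Σ) P = P (Σ ⊗ Σ)`.
-/

namespace Matrix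

variable {m n R : Type*} [Fintype m] [Fintype n] [DecidableEq m] [CommRing R]

noncomputable def colSpaceProj (D : Matrix n m R) : Matrix n n R :=
  D * (Dᵀ * D)⁻¹ * Dᵀ

theorem colSpaceProj_transpose (D : Matrix n m R) : (colSpaceProj D)ᵀ = colSpaceProj D := by
  rw [colSpaceProj, transpose_mul, transpose_mul, transpose_nonsing_inv, transpose_mul,
    transpose_transpose, Matrix.mul_assoc]

variable {D : Matrix n m R}

theorem colSpaceProj_mul_self_of_isUnit (hD : IsUnit (Dᵀ * D).det) : colSpaceProj D * D = D := by
  simp only [colSpaceProj, Matrix.mul_assoc, nonsing_inv_mul _ hD, Matrix.mul_one]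

theorem transpose_mul_colSpaceProj_of_isUnit (hD : IsUnit (Dᵀ * D).det) :
    Dᵀ * colSpaceProj D = Dᵀ := by
  simpa only [transpose_mul, colSpaceProj_transpose, transpose_transpose] using
    congrArg transpose (colSpaceProj_mul_self_of_isUnit hD)

theorem colSpaceProj_mul_colSpaceProj_of_isUnit (hD : IsUnit (Dᵀ * D).det) :
    colSpaceProj D * colSpaceProj D = colSpaceProj D := by
  calc colSpaceProj D * colSpaceProj D = colSpaceProj D * D * (Dᵀ * D)⁻¹ * Dᵀ := by
        rw [colSpaceProj]; simp only [Matrix.mul_assoc]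
    _ = colSpaceProj D := by rw [colSpaceProj_mul_self_of_isUnit hD, colSpaceProj]

theorem mul_inv_transpose_mul_mul_mul_transpose_of_commute [DecidableEq n] {W V : Matrix n n R}
    (hD : IsUnit (Dᵀ * D).det) (hWV : W * V = 1) (hW : Commute (colSpaceProj D) W)
    (hV : Commute (colSpaceProj D) V) :
    D * (Dᵀ * W * D)⁻¹ * Dᵀ = colSpaceProj D * V := by
  set P := colSpaceProj D with hP
  have hinv : (Dᵀ * W * D)⁻¹ = (Dᵀ * D)⁻¹ * Dᵀ * V * D * (Dᵀ * D)⁻¹ := by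
    refine inv_eq_right_inv ?_
    calc Dᵀ * W * D * ((Dᵀ * D)⁻¹ * Dᵀ * V * D * (Dᵀ * D)⁻¹)
        = Dᵀ * (W * P) * V * D * (Dᵀ * D)⁻¹ := by
          rw [hP, colSpaceProj]; simp only [Matrix.mul_assoc]
      _ = Dᵀ * D * (Dᵀ * D)⁻¹ := by
          rw [← hW.eq, ← Matrix.mul_assoc, transpose_mul_colSpaceProj_of_isUnit hD,
            Matrix.mul_assoc Dᵀ W V, hWV, Matrix.mul_one]
      _ = 1 := mul_nonsing_inv _ hD
  calc D * (Dᵀ * W * D)⁻¹ * Dᵀ = P * V * P := by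
        rw [hinv, hP, colSpaceProj]; simp only [Matrix.mul_assoc]
    _ = P * V := by rw [hV.eq, Matrix.mul_assoc, colSpaceProj_mul_colSpaceProj_of_isUnit hD]

end Matrix

section Vec

variable {k : ℕ}

theorem ext_of_mulVec_vecm {m : Type*} {X Y : Matrix m (Fin k × Fin k) ℝ}
    (h : ∀ A, X *ᵥ vecm A = Y *ᵥ vecm A) : X = Y :=
  ext_iff_mulVec.2 fun v => h (of fun i j => v (j, i))

theorem kronecker_mulVec_vecm (B C A : Matrix (Fin k) (Fin k) ℝ) :
    (B ⊗ₖ C) *ᵥ vecm A = vecm (C * A * Bᵀ) := by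
  ext ⟨j, i⟩
  simp only [mulVec, vecm, dotProduct, kroneckerMap_apply, mul_apply, Fintype.sum_prod_type,
    transpose_apply, Finset.sum_mul]
  exact Finset.sum_congr rfl fun _ _ => Finset.sum_congr rfl fun _ _ => by ring

end Vec

section Commutation

variable {k : ℕ} {K : Matrix (Fin k × Fin k) (Fin k × Fin k) ℝ}
  (hK : ∀ A : Matrix (Fin k) (Fin k) ℝ, K *ᵥ vecm A = vecm Aᵀ)
include hK

theorem commutation_mulVec (v : Fin k × Fin k → ℝ) : K *ᵥ v = v ∘ Prod.swap :=
  hK (of fun i j => v (j, i))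

theorem commutation_transpose : Kᵀ = K := by
  have hentry : ∀ p q, K p q = if p.swap = q then 1 else 0 := fun p q => by
    simpa [mulVec_single, Pi.single_apply] using
      congrFun (commutation_mulVec hK (Pi.single q 1)) p
  ext p q
  rw [transpose_apply, hentry, hentry]
  exact if_congr ⟨fun h => by rw [← h, Prod.swap_swap], fun h => by rw [← h, Prod.swap_swap]⟩
    rfl rfl

theorem commutation_mul_kronecker (B C : Matrix (Fin k) (Fin k) ℝ) :
    K * (B ⊗ₖ C) = (C ⊗ₖ B) * K := by
  refine ext_of_mulVec_vecm fun A => ?_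
  simp only [← mulVec_mulVec, kronecker_mulVec_vecm, hK, transpose_mul, transpose_transpose,
    Matrix.mul_assoc]

theorem symmetrizer_mulVec_vecm (A : Matrix (Fin k) (Fin k) ℝ) :
    ((1 / 2 : ℝ) • (1 + K)) *ᵥ vecm A = vecm ((1 / 2 : ℝ) • (A + Aᵀ)) := by
  rw [smul_mulVec, add_mulVec, one_mulVec, hK]
  rfl

theorem symmetrizer_mulVec_vecm_of_symm {A : Matrix (Fin k) (Fin k) ℝ} (hA : Aᵀ = A) :
    ((1 / 2 : ℝ) • (1 + K)) *ᵥ vecm A = vecm A := by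
  rw [symmetrizer_mulVec_vecm hK, hA, ← two_smul ℝ A, smul_smul]
  norm_num

theorem symmetrizer_mul_kronecker_self (B : Matrix (Fin k) (Fin k) ℝ) :
    (1 / 2 : ℝ) • (1 + K) * (B ⊗ₖ B) = (B ⊗ₖ B) * ((1 / 2 : ℝ) • (1 + K)) := by
  rw [Matrix.smul_mul, Matrix.mul_smul, add_mul, mul_add, one_mul, mul_one,
    commutation_mul_kronecker hK]

end Commutation

def sym2Matrix {n : Type*} (f : Sym2 n → ℝ) : Matrix n n ℝ :=
  of fun i j => f s(i, j)

theorem sym2Matrix_transpose {n : Type*} (f : Sym2 n → ℝ) : (sym2Matrix f)ᵀ = sym2Matrix f := by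
  ext i j
  simp [sym2Matrix, Sym2.eq_swap]

section Duplication

variable {k : ℕ} {D : Matrix (Fin k × Fin k) (Fin (k * (k + 1) / 2)) ℝ}
  {vech : Matrix (Fin k) (Fin k) ℝ → Fin (k * (k + 1) / 2) → ℝ}
  (hD1 : ∀ A : Matrix (Fin k) (Fin k) ℝ, Aᵀ = A → D *ᵥ vech A = vecm A)
  (hD2 : ∀ A : Matrix (Fin k) (Fin k) ℝ, Aᵀ = A → ((Dᵀ * D)⁻¹ * Dᵀ) *ᵥ vecm A = vech A)
include hD1 hD2

/- `f ↦ vech (sym2Matrix f)` is linear (it is `(DᵀD)⁻¹Dᵀ vec`) and injective (`D` undoes it),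
between spaces of the same dimension `k(k+1)/2 = card (Sym2 (Fin k))`. -/
theorem exists_symm_vech_eq (v : Fin (k * (k + 1) / 2) → ℝ) :
    ∃ A : Matrix (Fin k) (Fin k) ℝ, Aᵀ = A ∧ vech A = v := by
  let L := ((Dᵀ * D)⁻¹ * Dᵀ).mulVecLin ∘ₗ
    LinearMap.funLeft ℝ ℝ (fun p : Fin k × Fin k => s(p.2, p.1))
  have hL : ∀ f, L f = vech (sym2Matrix f) := fun f => hD2 _ (sym2Matrix_transpose f)
  have hinj : Function.Injective L := by
    intro f g hfg
    have hvec := congrArg (D *ᵥ ·) hfg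
    simp only [hL, hD1 _ (sym2Matrix_transpose _)] at hvec
    funext s
    induction s using Sym2.ind with
    | h i j => exact congrFun hvec (j, i)
  have hdim : Module.finrank ℝ (Sym2 (Fin k) → ℝ) =
      Module.finrank ℝ (Fin (k * (k + 1) / 2) → ℝ) := by
    simp [Sym2.card, Nat.choose_two_right, Nat.mul_comm]
  obtain ⟨f, rfl⟩ := (LinearMap.injective_iff_surjective_of_finrank_eq_finrank hdim).1 hinj v
  exact ⟨sym2Matrix f, sym2Matrix_transpose f, (hL f).symm⟩

theorem isUnit_det_transpose_mul_self : IsUnit (Dᵀ * D).det := by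
  refine isUnit_det_of_left_inverse (B := (Dᵀ * D)⁻¹) ?_
  rw [← Matrix.mul_assoc]
  refine ext_iff_mulVec.2 fun v => ?_
  obtain ⟨A, hA, rfl⟩ := exists_symm_vech_eq hD1 hD2 v
  rw [← mulVec_mulVec, hD1 A hA, hD2 A hA, one_mulVec]

theorem colSpaceProj_eq_symmetrizer {K : Matrix (Fin k × Fin k) (Fin k × Fin k) ℝ}
    (hK : ∀ A : Matrix (Fin k) (Fin k) ℝ, K *ᵥ vecm A = vecm Aᵀ) :
    colSpaceProj D = (1 / 2 : ℝ) • (1 + K) := by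
  set N := (1 / 2 : ℝ) • (1 + K)
  have hNt : Nᵀ = N := by
    rw [transpose_smul, transpose_add, transpose_one, commutation_transpose hK]
  have hND : N * D = D := by
    refine ext_iff_mulVec.2 fun v => ?_
    obtain ⟨A, hA, rfl⟩ := exists_symm_vech_eq hD1 hD2 v
    rw [← mulVec_mulVec, hD1 A hA, symmetrizer_mulVec_vecm_of_symm hK hA]
  have hsym : ∀ A : Matrix (Fin k) (Fin k) ℝ,
      ((1 / 2 : ℝ) • (A + Aᵀ))ᵀ = (1 / 2 : ℝ) • (A + Aᵀ) :=
    fun A => by rw [transpose_smul, transpose_add, transpose_transpose, add_comm]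
  have hPN : colSpaceProj D * N = N := by
    refine ext_of_mulVec_vecm fun A => ?_
    rw [← mulVec_mulVec, symmetrizer_mulVec_vecm hK, colSpaceProj, Matrix.mul_assoc,
      ← mulVec_mulVec, hD2 _ (hsym A), hD1 _ (hsym A)]
  calc colSpaceProj D = N * colSpaceProj D := by
        simp only [colSpaceProj, ← Matrix.mul_assoc, hND]
    _ = (colSpaceProj D * N)ᵀ := by rw [transpose_mul, hNt, colSpaceProj_transpose]
    _ = N := by rw [hPN, hNt]

end Duplication

/-- Property of the duplication matrix `D_k`:
`D_k (D_kᵀ (Σ⁻¹ ⊗ Σ⁻¹) D_k)⁻¹ D_kᵀ = ½ (I + K)(Σ ⊗ Σ)` for `Σ` positive definite symmetric,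
where `D_k vech A = vec A` and `(D_kᵀD_k)⁻¹D_kᵀ vec A = vech A` for symmetric `A`,
and `K` is the commutation matrix. -/
theorem duplication_property {k : ℕ}
    (S : Matrix (Fin k) (Fin k) ℝ) (hS : S.PosDef)
    (K : Matrix (Fin k × Fin k) (Fin k × Fin k) ℝ)
    (hK : ∀ A : Matrix (Fin k) (Fin k) ℝ, K.mulVec (vecm A) = vecm Aᵀ)
    (D : Matrix (Fin k × Fin k) (Fin (k * (k + 1) / 2)) ℝ)
    (vech : Matrix (Fin k) (Fin k) ℝ → Fin (k * (k + 1) / 2) → ℝ)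
    (hD1 : ∀ A : Matrix (Fin k) (Fin k) ℝ, Aᵀ = A → D.mulVec (vech A) = vecm A)
    (hD2 : ∀ A : Matrix (Fin k) (Fin k) ℝ, Aᵀ = A →
      ((Dᵀ * D)⁻¹ * Dᵀ).mulVec (vecm A) = vech A) :
    D * (Dᵀ * (S⁻¹ ⊗ₖ S⁻¹) * D)⁻¹ * Dᵀ = (1 / 2 : ℝ) • ((1 + K) * (S ⊗ₖ S)) := by
  have hP := colSpaceProj_eq_symmetrizer hD1 hD2 hK
  have hWV : (S⁻¹ ⊗ₖ S⁻¹) * (S ⊗ₖ S) = 1 := by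
    rw [← mul_kronecker_mul, nonsing_inv_mul _ hS.det_pos.ne'.isUnit, one_kronecker_one]
  have hcomm : ∀ B, Commute (colSpaceProj D) (B ⊗ₖ B) := fun B => by
    rw [hP]; exact symmetrizer_mul_kronecker_self hK B
  rw [mul_inv_transpose_mul_mul_mul_transpose_of_commute (isUnit_det_transpose_mul_self hD1 hD2)
    hWV (hcomm _) (hcomm _), hP, Matrix.smul_mul]
end
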